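/- Let r be the regular paperfolding sequence (r_m = 1 if m ∈ R = {(4k+1)*2^n - 1 : n,k >= 0}, else 0). For every k >= 1, the t-Hankel determinant H_k(r,t) — the determinant of the k×k matrix with (i,j)-entry r_{i+j}*t if i=j and r_{i+j} otherwise — is a polynomial in t of degree at most 3. -/

import Mathlib

open Polynomial

open scoped Classical

/-- `R = {(4k+1)·2^n − 1 : n, k ≥ 0}`. -/
def Rset : Set ℕ := {m | ∃ n k : ℕ, (4 * k + 1) * 2 ^ n - 1 = m}

/-- The regular paperfolding sequence: the indicator sequence of `R`. -/
noncomputable def paperfolding (m : ℕ) : ℤ := if m ∈ Rset then 1 else 0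

/-!
Write the matrix as `A + X • diagonal d`, where `A` is the Hankel matrix of `r` with its diagonal
set to zero and `d i = r (2 * i)`, which is `1` for even `i` and `0` for odd `i`. Multilinearity in
the rows gives `det = ∑ s, (∏ i ∈ s, d i) * det A_s * X ^ #s`, where `A_s` is `A` with the rows in
`s` replaced by unit rows, so only sets `s` of even indices contribute. For odd `i` and `j`,
`r (i + j) = 1` iff `i + j ≡ 0 [MOD 4]`; hence on the odd columns an odd row of `A` only depends on
`i % 4`. The rows of `A_s` indexed by `s` and by the odd indices therefore lie in a space of
dimension at most `2 + #evens ≤ #odds + 3`, and `det A_s = 0` as soon as `#s ≥ 4`.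
-/

open Matrix Finset

theorem Matrix.det_eq_zero_of_submatrix_eq_mul {R n m ι : Type*} [CommRing R] [IsDomain R]
    [Fintype n] [DecidableEq n] [Fintype m] [Fintype ι]
    (M : Matrix n n R) {e : m → n} (he : Function.Injective e) (F : Matrix m ι R)
    (G : Matrix ι n R) (hM : M.submatrix e id = F * G)
    (hcard : Fintype.card ι < Fintype.card m) : M.det = 0 := by
  by_contra hdet
  have hrows : ∀ i, M (e i) ∈ Submodule.span R (Set.range G) := fun i =>
    Submodule.mem_span_range_iff_exists_fun R |>.mpr ⟨F i, by
      ext j; simpa [mul_apply, sum_apply] using (congrFun (congrFun hM i) j).symm⟩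
  have := Module.Finite.span_of_finite R (Set.finite_range G)
  have hli : LinearIndependent R fun i => (⟨M (e i), hrows i⟩ : Submodule.span R (Set.range G)) :=
    LinearIndependent.of_comp (Submodule.subtype _)
      ((linearIndependent_rows_of_det_ne_zero hdet).comp e he)
  have := hli.fintype_card_le_finrank.trans (finrank_range_le_card G)
  omega

theorem Matrix.det_add_diagonal_X_eq_sum {R n : Type*} [CommRing R] [Fintype n] [DecidableEq n]
    (A : Matrix n n R) (d : n → R) :
    (A.map C + diagonal fun i => C (d i) * X).det =
      ∑ s : Finset n,
        C ((∏ i ∈ s, d i) * (of (s.piecewise (1 : Matrix n n R).row A.row)).det) * X ^ #s := by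
  let D := (detRowAlternating : (n → R[X]) [⋀^n]→ₗ[R[X]] R[X])
  have hrows : (A.map C + diagonal fun i => C (d i) * X) =
      of ((fun i => (C (d i) * X) • (1 : Matrix n n R[X]).row i) + (A.map C).row) := by
    ext i j : 2
    by_cases h : i = j <;> simp [h, add_comm]
  have hterm : ∀ s : Finset n,
      s.piecewise (fun i => (C (d i) * X) • (1 : Matrix n n R[X]).row i) ((A.map C).row) =
        fun i => (if i ∈ s then C (d i) * X else 1) •
          ((of (s.piecewise (1 : Matrix n n R).row A.row)).map C).row i := by
    intro s
    ext i j : 2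
    by_cases h : i ∈ s <;> simp [h, Finset.piecewise, one_apply, apply_ite C]
  rw [hrows]
  change D ((fun i => (C (d i) * X) • (1 : Matrix n n R[X]).row i) + (A.map C).row) = _
  rw [D.map_add_univ]
  refine sum_congr rfl fun s _ => ?_
  have hdet : D ((of (s.piecewise (1 : Matrix n n R).row A.row)).map C).row =
      C (of (s.piecewise (1 : Matrix n n R).row A.row)).det :=
    (RingHom.map_det C _).symm
  rw [hterm, D.map_smul_univ, hdet, prod_ite_mem, univ_inter, prod_mul_distrib, prod_const,
    smul_eq_mul, map_mul, map_prod]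
  ring

theorem Matrix.natDegree_det_add_diagonal_X_le {R n : Type*} [CommRing R] [Fintype n]
    [DecidableEq n] (A : Matrix n n R) (d : n → R) {N : ℕ}
    (h : ∀ s : Finset n, N < #s → (∀ i ∈ s, d i ≠ 0) →
      (of (s.piecewise (1 : Matrix n n R).row A.row)).det = 0) :
    (A.map C + diagonal fun i => C (d i) * X).det.natDegree ≤ N := by
  rw [det_add_diagonal_X_eq_sum]
  refine natDegree_sum_le_of_forall_le _ _ fun s _ => ?_
  by_cases hs : #s ≤ N
  · exact (natDegree_C_mul_X_pow_le _ _).trans hs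
  by_cases hd : ∀ i ∈ s, d i ≠ 0
  · simp [h s (not_le.mp hs) hd]
  obtain ⟨i, hi, hdi⟩ : ∃ i ∈ s, d i = 0 := by simpa using hd
  simp [prod_eq_zero hi hdi]

theorem two_mul_mem_Rset_iff (m : ℕ) : 2 * m ∈ Rset ↔ m % 2 = 0 := by
  constructor
  · rintro ⟨_ | n, k, h⟩
    · omega
    · have : 1 ≤ (4 * k + 1) * 2 ^ n := Nat.one_le_iff_ne_zero.mpr (by positivity)
      rw [pow_succ, ← mul_assoc] at h
      omega
  · intro hm
    exact ⟨0, m / 2, by omega⟩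

theorem paperfolding_two_mul (m : ℕ) : paperfolding (2 * m) = if m % 2 = 0 then 1 else 0 := by
  simp only [paperfolding, two_mul_mem_Rset_iff]

theorem paperfolding_add_of_odd {i j : ℕ} (hi : i % 2 = 1) (hj : j % 2 = 1) :
    paperfolding (i + j) = if (i + j) % 4 = 0 then 1 else 0 := by
  obtain ⟨m, hm⟩ : ∃ m, i + j = 2 * m := ⟨(i + j) / 2, by omega⟩
  rw [hm, paperfolding_two_mul]
  congr 1
  simp only [eq_iff_iff]
  omega

theorem card_filter_even_le_card_filter_odd_add_one (k : ℕ) :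
    #{i : Fin k | (i : ℕ) % 2 = 0} ≤ #{i : Fin k | (i : ℕ) % 2 = 1} + 1 := by
  calc #{i : Fin k | (i : ℕ) % 2 = 0}
      = #(({i | (i : ℕ) % 2 = 0} : Finset (Fin k)).image fun i : Fin k => (i : ℕ) + 1) :=
        (card_image_of_injective _ fun a b h => Fin.ext (by simpa using h)).symm
    _ ≤ #(insert k (({i | (i : ℕ) % 2 = 1} : Finset (Fin k)).image Fin.val)) := by
        refine card_le_card fun x hx => ?_
        simp only [mem_image, mem_filter, mem_univ, true_and, mem_insert] at hx ⊢
        obtain ⟨i, hi, rfl⟩ := hx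
        by_cases hik : (i : ℕ) + 1 = k
        · exact Or.inl hik
        · exact Or.inr ⟨⟨i + 1, by omega⟩, by simp only; omega, rfl⟩
    _ ≤ #{i : Fin k | (i : ℕ) % 2 = 1} + 1 :=
        (card_insert_le _ _).trans (by rw [card_image_of_injective _ Fin.val_injective])

noncomputable def paperfoldingHankelOffDiag (k : ℕ) : Matrix (Fin k) (Fin k) ℤ :=
  of fun i j => if i = j then 0 else paperfolding (i + j)

theorem det_piecewise_one_paperfoldingHankelOffDiag_eq_zero {k : ℕ} (s : Finset (Fin k))
    (hs : 3 < #s) (heven : ∀ i ∈ s, (i : ℕ) % 2 = 0) :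
    (of (s.piecewise (1 : Matrix (Fin k) (Fin k) ℤ).row
      (paperfoldingHankelOffDiag k).row)).det = 0 := by
  have hcard := card_filter_even_le_card_filter_odd_add_one k
  set B := of (s.piecewise (1 : Matrix (Fin k) (Fin k) ℤ).row (paperfoldingHankelOffDiag k).row)
  set E : Finset (Fin k) := {j | (j : ℕ) % 2 = 0}
  set O : Finset (Fin k) := {i | (i : ℕ) % 2 = 1}
  -- For `i ∈ s ∪ O`: `B i j = ∑ a, [i % 4 = 2a + 1] * [j % 4 = 3 - 2a] + ∑ e ∈ E, B i e * [j = e]`.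
  refine det_eq_zero_of_submatrix_eq_mul B (e := ((↑) : ↥(s ∪ O) → Fin k)) Subtype.val_injective
    (of fun i => Sum.elim (fun a : Fin 2 => if (i : ℕ) % 4 = 2 * a + 1 then 1 else 0)
      fun j : E => B i j)
    (of (Sum.elim (fun a : Fin 2 => fun j : Fin k => if (j : ℕ) % 4 = 3 - 2 * a then 1 else 0)
      fun (j' : E) j => if (j' : Fin k) = j then 1 else 0)) ?_ ?_
  · ext ⟨i, hi⟩ j
    simp only [submatrix_apply, id_eq, mul_apply, of_apply, Fintype.sum_sum_type,
      Fin.sum_univ_two, Sum.elim_inl, Sum.elim_inr, Fin.val_zero, Fin.val_one, univ_eq_attach,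
      mul_ite, mul_one, mul_zero, sum_attach E fun j' => if j' = j then B i j' else 0,
      sum_ite_eq', E, mem_filter, mem_univ, true_and]
    rcases mem_union.mp hi with his | hiO
    · have := heven i his
      simp only [B, of_apply, piecewise_eq_of_mem _ _ _ his, row_apply, one_apply, Fin.ext_iff]
      split_ifs <;> omega
    · have hi2 : (i : ℕ) % 2 = 1 := by simpa [O] using hiO
      have his : i ∉ s := fun h => by have := heven i h; omega
      simp only [B, of_apply, piecewise_eq_of_notMem _ _ _ his, row_apply,
        paperfoldingHankelOffDiag, Fin.ext_iff]
      by_cases hj2 : (j : ℕ) % 2 = 1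
      · rw [paperfolding_add_of_odd hi2 hj2]
        split_ifs <;> omega
      · split_ifs <;> omega
  · have hdisj : Disjoint s O := disjoint_left.mpr fun i hi hO => by
      have := heven i hi; simp [O] at hO; omega
    simp only [Fintype.card_sum, Fintype.card_fin, Fintype.card_coe, card_union_of_disjoint hdisj]
    omega

theorem stmt_18_general (k : ℕ) :
    ((Matrix.of fun i j : Fin k =>
        if i = j then C (paperfolding ((i : ℕ) + (j : ℕ))) * X
        else C (paperfolding ((i : ℕ) + (j : ℕ)))).det).natDegree ≤ 3 := by
  have hsplit : (Matrix.of fun i j : Fin k =>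
      if i = j then C (paperfolding ((i : ℕ) + (j : ℕ))) * X
      else C (paperfolding ((i : ℕ) + (j : ℕ)))) =
        (paperfoldingHankelOffDiag k).map C +
          diagonal fun i : Fin k => C (paperfolding (i + i)) * X := by
    ext i j : 2
    by_cases h : i = j <;> simp [h, paperfoldingHankelOffDiag]
  rw [hsplit]
  refine natDegree_det_add_diagonal_X_le _ _ fun s hs hd =>
    det_piecewise_one_paperfoldingHankelOffDiag_eq_zero s hs fun i hi => ?_
  exact by_contra fun hodd => hd i hi (by rw [← two_mul, paperfolding_two_mul, if_neg hodd])

theorem stmt_18 (k : ℕ) (hk : 1 ≤ k) :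
    ((Matrix.of fun i j : Fin k =>
        if i = j then C (paperfolding ((i : ℕ) + (j : ℕ))) * X
        else C (paperfolding ((i : ℕ) + (j : ℕ)))).det).natDegree ≤ 3 :=
  stmt_18_general k
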